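/- arXiv:1908.03893 — 7 statements merged into one kernel-verified Lean document; each statement's English description precedes it below -/
import Mathlib

section
/- Let S_n be the star on n ≥ 2 vertices and α ∈ [0,1]. The eigenvalues of the α-distance matrix D_α(S_n), listed with multiplicity, are: (2n−1)α − 2 with multiplicity n − 2, together with the two values (αn + 2n − 4 ± √((α−2)²n² + 8αn − 12n − 8α + 12))/2. -/
/-!
With the centre as vertex `0`, `D_α(S_n)` has the star pattern `a = α(n-1)` at the centre,
`b = α(2n-3)` at the leaves, `c = 1-α` between the centre and a leaf and `d = 2(1-α)` between two
leaves. In the basis `e₀, e₁, e_j - e₁ (j ≥ 2)` the vectors `e_j - e₁` are eigenvectors for `b - d`,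
and the matrix becomes block triangular with the `2 × 2` block `[[a, c], [(n-1)c, b + (n-2)d]]`,
whose discriminant `(a - b - (n-2)d)² + 4(n-1)c²` is nonnegative.
-/

open Finset Matrix Polynomial Real

/-- Distance matrix of a graph on `Fin n`: `(i,j)` entry is the graph distance. -/
noncomputable def distMatrix {n : ℕ} (G : SimpleGraph (Fin n)) : Matrix (Fin n) (Fin n) ℝ :=
  fun i j => (G.dist i j : ℝ)

/-- Transmission of a vertex: sum of distances to all other vertices. -/
noncomputable def transmission {n : ℕ} (G : SimpleGraph (Fin n)) (i : Fin n) : ℝ :=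
  ∑ j, (G.dist i j : ℝ)

/-- The α-distance matrix `D_α(G) = α·Tr(G) + (1-α)·D(G)`. -/
noncomputable def alphaDistMatrix {n : ℕ} (G : SimpleGraph (Fin n)) (α : ℝ) : Matrix (Fin n) (Fin n) ℝ :=
  α • Matrix.diagonal (transmission G) + (1 - α) • distMatrix G

/-- Wiener index `W(G) = (1/2)·∑_{i≠j} d(v_i,v_j)`. -/
noncomputable def wiener {n : ℕ} (G : SimpleGraph (Fin n)) : ℝ :=
  (1 / 2) * ∑ i, ∑ j, (G.dist i j : ℝ)

/-- Frobenius norm of a real matrix. -/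
noncomputable def frobNorm {n : ℕ} (M : Matrix (Fin n) (Fin n) ℝ) : ℝ :=
  Real.sqrt (∑ i, ∑ j, (M i j) ^ 2)

/-- The star on `n` vertices: vertex `0` is adjacent to every other vertex. -/
def starGraph (n : ℕ) : SimpleGraph (Fin n) where
  Adj i j := i ≠ j ∧ ((i : ℕ) = 0 ∨ (j : ℕ) = 0)
  symm := ⟨fun _ _ h => ⟨h.1.symm, h.2.symm⟩⟩
  loopless := ⟨fun _ h => h.1 rfl⟩

section StarPattern

variable {R : Type*}

def starPattern (n : ℕ) (a b c d : R) : Matrix (Fin n) (Fin n) R :=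
  of fun i j => if i = j then (if (i : ℕ) = 0 then a else b)
    else if (i : ℕ) = 0 ∨ (j : ℕ) = 0 then c else d

def starSplit (m : ℕ) : Fin 2 ⊕ Fin m ≃ Fin (m + 2) :=
  finSumFinEquiv.trans (finCongr (Nat.add_comm 2 m))

lemma starSplit_eq_zero_iff {m : ℕ} {x : Fin 2 ⊕ Fin m} :
    starSplit m x = 0 ↔ x = Sum.inl 0 := by
  rw [Fin.ext_iff, Fin.val_zero]
  rcases x with k | j
  · fin_cases k <;> simp [starSplit]
  · simp [starSplit]

lemma starPattern_submatrix_starSplit (m : ℕ) (a b c d : R) :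
    (starPattern (m + 2) a b c d).submatrix (starSplit m) (starSplit m) =
      of fun x y => if x = y then (if x = Sum.inl 0 then a else b)
        else if x = Sum.inl 0 ∨ y = Sum.inl 0 then c else d := by
  ext x y
  simp [starPattern, starSplit_eq_zero_iff]

variable [CommRing R]

/-- `1 - leafShear m` is the change of basis `e (inr j) ↦ e (inr j) - e (inl 1)`. -/
def leafShear (m : ℕ) : Matrix (Fin 2 ⊕ Fin m) (Fin 2 ⊕ Fin m) R :=
  of fun x y => if x = Sum.inl 1 ∧ y.isRight then 1 else 0

lemma leafShear_mul_self (m : ℕ) : (leafShear m : Matrix _ _ R) * leafShear m = 0 := by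
  ext x y
  simp [leafShear, mul_apply, Fintype.sum_sum_type]

def starBlocks (m : ℕ) (a b c d : R) : Matrix (Fin 2 ⊕ Fin m) (Fin 2 ⊕ Fin m) R :=
  fromBlocks !![a, c; (m + 1) * c, b + m * d] 0 (of fun _ k => ![c, d] k)
    (diagonal fun _ => b - d)

lemma starPattern_submatrix_mul_one_sub_leafShear (m : ℕ) (a b c d : R) :
    (starPattern (m + 2) a b c d).submatrix (starSplit m) (starSplit m) * (1 - leafShear m) =
      (1 - leafShear m) * starBlocks m a b c d := by
  rw [starPattern_submatrix_starSplit, Matrix.mul_sub, Matrix.sub_mul, Matrix.mul_one,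
    Matrix.one_mul]
  ext (i | i) (j | j)
  · fin_cases i <;> fin_cases j <;> simp [starBlocks, leafShear, mul_apply, add_one_mul]
  · fin_cases i <;> simp [starBlocks, leafShear, mul_apply, diagonal_apply]
  · fin_cases j <;> simp [starBlocks, leafShear, mul_apply]
  · by_cases h : i = j <;> simp [starBlocks, leafShear, mul_apply, h]

lemma charpoly_starPattern [Nontrivial R] (m : ℕ) (a b c d : R) :
    (starPattern (m + 2) a b c d).charpoly =
      (X ^ 2 - C (a + (b + m * d)) * X + C (a * (b + m * d) - (m + 1) * c * c)) *
        (X - C (b - d)) ^ m := by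
  set A := (starPattern (m + 2) a b c d).submatrix (starSplit m) (starSplit m)
  set N : Matrix _ _ R := leafShear m
  have hinv : (1 - N) * (1 + N) = 1 := by
    rw [Matrix.sub_mul, Matrix.one_mul, Matrix.mul_add, Matrix.mul_one, leafShear_mul_self]
    abel
  have hinv' : (1 + N) * (1 - N) = 1 := by
    rw [Matrix.add_mul, Matrix.one_mul, Matrix.mul_sub, Matrix.mul_one, leafShear_mul_self]
    abel
  calc (starPattern (m + 2) a b c d).charpoly
      = A.charpoly := (charpoly_reindex (starSplit m).symm _).symm
    _ = (A * (1 - N) * (1 + N)).charpoly := by rw [Matrix.mul_assoc, hinv, Matrix.mul_one]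
    _ = ((1 + N) * (1 - N) * starBlocks m a b c d).charpoly := by
      rw [charpoly_mul_comm, starPattern_submatrix_mul_one_sub_leafShear, Matrix.mul_assoc]
    _ = _ := by
      rw [hinv', Matrix.one_mul, starBlocks, charpoly_fromBlocks_zero₁₂, charpoly_fin_two,
        charpoly_diagonal, trace_fin_two_of, det_fin_two_of, prod_const, card_univ,
        Fintype.card_fin]
      ring_nf

end StarPattern

lemma roots_charpoly_starPattern (m : ℕ) (a b c d : ℝ) :
    (starPattern (m + 2) a b c d).charpoly.roots =
      Multiset.replicate m (b - d) +
        {(a + (b + m * d) + √((a - (b + m * d)) ^ 2 + 4 * (m + 1) * c ^ 2)) / 2,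
         (a + (b + m * d) - √((a - (b + m * d)) ^ 2 + 4 * (m + 1) * c ^ 2)) / 2} := by
  set e := b + m * d
  set Δ := (a - e) ^ 2 + 4 * (m + 1) * c ^ 2
  set l₁ := (a + e + √Δ) / 2
  set l₂ := (a + e - √Δ) / 2
  have hΔ : √Δ ^ 2 = Δ := sq_sqrt (by positivity)
  have hquadratic : X ^ 2 - C (a + e) * X + C (a * e - (m + 1) * c * c) =
      (X - C l₁) * (X - C l₂) := by
    have hsum : a + e = l₁ + l₂ := by ring
    have hprod : a * e - (m + 1) * c * c = l₁ * l₂ := by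
      rw [show l₁ * l₂ = ((a + e) ^ 2 - √Δ ^ 2) / 4 by ring, hΔ]
      ring
    rw [hsum, hprod, C_add, C_mul]
    ring
  have hne : (X - C l₁) * (X - C l₂) * (X - C (b - d)) ^ m ≠ 0 :=
    (((monic_X_sub_C _).mul (monic_X_sub_C _)).mul ((monic_X_sub_C _).pow m)).ne_zero
  rw [charpoly_starPattern, hquadratic, roots_mul hne, roots_mul (left_ne_zero_of_mul hne),
    roots_X_sub_C, roots_X_sub_C, roots_pow, roots_X_sub_C, Multiset.nsmul_singleton,
    add_comm, Multiset.insert_eq_cons, ← Multiset.singleton_add]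

lemma starGraph_dist {n : ℕ} (i j : Fin n) :
    (starGraph n).dist i j = if i = j then 0 else if (i : ℕ) = 0 ∨ (j : ℕ) = 0 then 1 else 2 := by
  split_ifs with hij hcentre
  · simp [hij]
  · exact SimpleGraph.dist_eq_one_iff_adj.mpr ⟨hij, hcentre⟩
  · rw [not_or] at hcentre
    have hcommon : ⟨0, by omega⟩ ∈ (starGraph n).commonNeighbors i j := by
      refine ⟨⟨?_, Or.inr rfl⟩, ⟨?_, Or.inr rfl⟩⟩ <;> simp [Fin.ext_iff, hcentre]
    have hedist : (starGraph n).edist i j = 2 :=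
      SimpleGraph.edist_eq_two_iff.mpr ⟨hij, fun h => h.2.elim hcentre.1 hcentre.2, _, hcommon⟩
    simp [SimpleGraph.dist, hedist]

lemma transmission_starGraph {n : ℕ} (i : Fin n) :
    transmission (starGraph n) i = if (i : ℕ) = 0 then (n : ℝ) - 1 else 2 * n - 3 := by
  simp only [transmission, starGraph_dist]
  split_ifs with hi
  · simp [hi, Finset.sum_ite, Finset.filter_ne, Finset.card_erase_of_mem, Nat.cast_pred i.pos]
  · obtain ⟨k, rfl⟩ : ∃ k, n = k + 1 := ⟨n - 1, by omega⟩
    obtain ⟨j, rfl⟩ := (Fin.exists_succ_eq (x := i)).mpr (by rintro rfl; exact hi rfl)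
    rw [Fin.sum_univ_succ]
    simp [Finset.sum_ite, Finset.filter_ne, Finset.card_erase_of_mem, Nat.cast_pred j.pos]
    ring

lemma alphaDistMatrix_starGraph (n : ℕ) (α : ℝ) :
    alphaDistMatrix (starGraph n) α =
      starPattern n (α * (n - 1)) (α * (2 * n - 3)) (1 - α) (2 * (1 - α)) := by
  ext i j
  simp only [alphaDistMatrix, distMatrix, starPattern, transmission_starGraph, starGraph_dist,
    Matrix.add_apply, Matrix.smul_apply, diagonal_apply, of_apply, smul_eq_mul]
  split_ifs <;> simp_all [mul_comm]

theorem stmt_1_general {n : ℕ} (hn : 2 ≤ n) (α : ℝ)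
    (hA : (alphaDistMatrix (starGraph n) α).IsHermitian) :
    Finset.univ.val.map hA.eigenvalues =
      Multiset.replicate (n - 2) ((2 * (n : ℝ) - 1) * α - 2) +
        {(α * (n : ℝ) + 2 * n - 4 +
            Real.sqrt ((α - 2) ^ 2 * (n : ℝ) ^ 2 + 8 * α * n - 12 * n - 8 * α + 12)) / 2,
         (α * (n : ℝ) + 2 * n - 4 -
            Real.sqrt ((α - 2) ^ 2 * (n : ℝ) ^ 2 + 8 * α * n - 12 * n - 8 * α + 12)) / 2} := by
  obtain ⟨m, rfl⟩ : ∃ m, n = m + 2 := ⟨n - 2, by omega⟩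
  have hroots := hA.roots_charpoly_eq_eigenvalues
  rw [RCLike.ofReal_real_eq_id, Function.id_comp] at hroots
  rw [← hroots, alphaDistMatrix_starGraph, roots_charpoly_starPattern, Nat.add_sub_cancel]
  push_cast
  ring_nf

theorem stmt_1 {n : ℕ} (hn : 2 ≤ n) (α : ℝ) (hα : α ∈ Set.Icc (0 : ℝ) 1)
    (hA : (alphaDistMatrix (starGraph n) α).IsHermitian) :
    Finset.univ.val.map hA.eigenvalues =
      Multiset.replicate (n - 2) ((2 * (n : ℝ) - 1) * α - 2) +
        {(α * (n : ℝ) + 2 * n - 4 +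
            Real.sqrt ((α - 2) ^ 2 * (n : ℝ) ^ 2 + 8 * α * n - 12 * n - 8 * α + 12)) / 2,
         (α * (n : ℝ) + 2 * n - 4 -
            Real.sqrt ((α - 2) ^ 2 * (n : ℝ) ^ 2 + 8 * α * n - 12 * n - 8 * α + 12)) / 2} :=
  stmt_1_general hn α hA
end

section
/- Let G be a simple undirected connected graph with n ≥ 2 vertices and let α ∈ [1/2, 1). Then the α-distance energy satisfies ς_α(G) ≥ 2(1−α)(n−1), with equality if and only if G is the complete graph K_n. -/
open Finset Matrix Polynomial Real

/-! The eigenvalues `σᵢ` of `D_α` sum to its trace `2αW`, so the numbers `σᵢ - 2αW/n` sum to zero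
and the energy is at least twice the largest of them. The Rayleigh quotient of the all-ones vector
gives `σ₁ ≥ 2W/n`, so the energy is at least `4(1-α)W/n`. Distinct vertices are at distance at
least `1`, so `2W ≥ n(n-1)`, with equality only for `K_n`. For `K_n`,
`D_α = (1-α)J + (αn-1)I` satisfies `(D_α - (n-1)I)(D_α - (αn-1)I) = 0`, so every eigenvalue is
`n-1` or `αn-1`; with the trace this determines the energy. -/

section
variable {ι : Type*} [Fintype ι] [DecidableEq ι]

open scoped MatrixOrder in
theorem Matrix.IsHermitian.dotProduct_mulVec_le {A : Matrix ι ι ℝ} (hA : A.IsHermitian) {μ : ℝ}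
    (hμ : ∀ i, hA.eigenvalues i ≤ μ) (x : ι → ℝ) : x ⬝ᵥ A *ᵥ x ≤ μ * (x ⬝ᵥ x) := by
  have hle : A ≤ algebraMap ℝ _ μ := le_algebraMap_of_spectrum_le (by
    rw [hA.spectrum_real_eq_range_eigenvalues]; rintro _ ⟨i, rfl⟩; exact hμ i) hA
  simpa [Algebra.algebraMap_eq_smul_one, sub_mulVec, dotProduct_sub, smul_mulVec] using
    (Matrix.le_iff.mp hle).re_dotProduct_nonneg x

theorem Matrix.IsHermitian.eigenvalues_eq_or_eq {A : Matrix ι ι ℝ} (hA : A.IsHermitian) {a b : ℝ}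
    (h : (A - a • 1) * (A - b • 1) = 0) (i : ι) :
    hA.eigenvalues i = a ∨ hA.eigenvalues i = b := by
  set v : ι → ℝ := ⇑(hA.eigenvectorBasis i)
  have hv (c : ℝ) : (A - c • 1) *ᵥ v = (hA.eigenvalues i - c) • v := by
    rw [sub_mulVec, hA.mulVec_eigenvectorBasis, smul_mulVec, one_mulVec, sub_smul]
  have hne : v ≠ 0 := by simpa [v] using hA.eigenvectorBasis.orthonormal.ne_zero i
  have key : ((hA.eigenvalues i - a) * (hA.eigenvalues i - b)) • v = 0 := by
    rw [← zero_mulVec v, ← h, ← mulVec_mulVec, hv, mulVec_smul, hv, smul_smul, mul_comm]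
  rcases mul_eq_zero.mp ((smul_eq_zero.mp key).resolve_right hne) with h | h
  · exact Or.inl (sub_eq_zero.mp h)
  · exact Or.inr (sub_eq_zero.mp h)

theorem Matrix.IsHermitian.trace_eq_sum_eigenvalues_real {A : Matrix ι ι ℝ} (hA : A.IsHermitian) :
    A.trace = ∑ i, hA.eigenvalues i := by
  simpa using hA.trace_eq_sum_eigenvalues

end

theorem two_mul_le_sum_abs_of_sum_eq_zero {ι : Type*} [Fintype ι] {f : ι → ℝ}
    (hf : ∑ i, f i = 0) (m : ι) : 2 * f m ≤ ∑ i, |f i| := by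
  classical
  have hrest : ∑ i ∈ univ.erase m, f i = -f m := by
    linarith [sum_erase_add univ f (mem_univ m)]
  calc 2 * f m ≤ |f m| + |∑ i ∈ univ.erase m, f i| := by
        rw [hrest, abs_neg]; linarith [le_abs_self (f m)]
    _ ≤ |f m| + ∑ i ∈ univ.erase m, |f i| := by gcongr; exact abs_sum_le_sum_abs _ _
    _ = ∑ i, |f i| := add_sum_erase univ (fun i => |f i|) (mem_univ m)

theorem sum_abs_of_forall_eq_or_eq_neg {ι : Type*} [Fintype ι] {f : ι → ℝ} {a b : ℝ}
    (ha : 0 ≤ a) (hb : 0 ≤ b) (hab : 0 < a + b) (hf : ∀ i, f i = a ∨ f i = -b)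
    (hsum : ∑ i, f i = 0) : ∑ i, |f i| = Fintype.card ι * (2 * a * b / (a + b)) := by
  -- `|x|` agrees with an affine function of `x` on the two-point set `{a, -b}`
  have hlin (i : ι) : |f i| = (a - b) / (a + b) * f i + 2 * a * b / (a + b) := by
    rcases hf i with h | h <;> rw [h] <;> field_simp
    · rw [abs_of_nonneg ha]; ring
    · rw [abs_neg, abs_of_nonneg hb]; ring
  simp only [hlin, sum_add_distrib, ← mul_sum, hsum, mul_zero, zero_add, sum_const, card_univ,
    nsmul_eq_mul]

section
variable {n : ℕ}

theorem dist_top_le_dist {G : SimpleGraph (Fin n)} (hG : G.Connected) (i j : Fin n) :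
    (⊤ : SimpleGraph (Fin n)).dist i j ≤ G.dist i j :=
  (hG.preconnected i j).dist_anti le_top

theorem exists_dist_top_lt_dist {G : SimpleGraph (Fin n)} (hG : G.Connected) (hG' : G ≠ ⊤) :
    ∃ i j, (⊤ : SimpleGraph (Fin n)).dist i j < G.dist i j := by
  obtain ⟨i, j, hij, hnadj⟩ : ∃ i j, i ≠ j ∧ ¬G.Adj i j := by
    by_contra! h
    exact hG' (eq_top_iff.mpr fun i j hij => h i j hij)
  refine ⟨i, j, ?_⟩
  rw [SimpleGraph.dist_top_of_ne hij]
  have hpos := hG.pos_dist_of_ne hij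
  have hne_one : G.dist i j ≠ 1 := fun h => hnadj (SimpleGraph.dist_eq_one_iff_adj.mp h)
  omega

theorem wiener_top : wiener (⊤ : SimpleGraph (Fin n)) = n * (n - 1) / 2 := by
  rcases n with _ | n
  · simp [wiener]
  · simp [wiener, SimpleGraph.dist_top, sum_ite, filter_ne]
    ring

theorem wiener_top_le {G : SimpleGraph (Fin n)} (hG : G.Connected) :
    wiener (⊤ : SimpleGraph (Fin n)) ≤ wiener G := by
  unfold wiener
  refine mul_le_mul_of_nonneg_left ?_ (by norm_num)
  exact sum_le_sum fun i _ => sum_le_sum fun j _ => by exact_mod_cast dist_top_le_dist hG i j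

theorem wiener_top_lt {G : SimpleGraph (Fin n)} (hG : G.Connected) (hG' : G ≠ ⊤) :
    wiener (⊤ : SimpleGraph (Fin n)) < wiener G := by
  obtain ⟨i, j, hij⟩ := exists_dist_top_lt_dist hG hG'
  unfold wiener
  gcongr 1 / 2 * ?_
  refine sum_lt_sum (fun i _ => ?_) ⟨i, mem_univ _, sum_lt_sum (fun j _ => ?_)
    ⟨j, mem_univ _, by exact_mod_cast hij⟩⟩
  · exact sum_le_sum fun j _ => by exact_mod_cast dist_top_le_dist hG i j
  · exact_mod_cast dist_top_le_dist hG i j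

end

noncomputable def alphaDistEnergy {n : ℕ} (G : SimpleGraph (Fin n)) (α : ℝ)
    (hA : (alphaDistMatrix G α).IsHermitian) : ℝ :=
  ∑ i, |hA.eigenvalues i - 2 * α * wiener G / n|

section
variable {n : ℕ} (G : SimpleGraph (Fin n)) (α : ℝ)

theorem trace_alphaDistMatrix : (alphaDistMatrix G α).trace = 2 * α * wiener G := by
  simp [alphaDistMatrix, distMatrix, Matrix.trace, transmission, wiener, ← mul_sum]
  ring

theorem ones_dotProduct_alphaDistMatrix_mulVec_ones :
    1 ⬝ᵥ alphaDistMatrix G α *ᵥ 1 = 2 * wiener G := by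
  simp [alphaDistMatrix, distMatrix, transmission, wiener, dotProduct, Matrix.mulVec,
    sum_add_distrib, diagonal_apply, ← mul_sum]
  ring

theorem sum_eigenvalues_sub_eq_zero (hA : (alphaDistMatrix G α).IsHermitian) :
    ∑ i, (hA.eigenvalues i - 2 * α * wiener G / n) = 0 := by
  obtain rfl | hn := eq_or_ne n 0
  · simp
  rw [sum_sub_distrib, ← hA.trace_eq_sum_eigenvalues_real, trace_alphaDistMatrix]
  simp
  field_simp
  ring

theorem four_mul_wiener_le_alphaDistEnergy (hA : (alphaDistMatrix G α).IsHermitian) :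
    4 * (1 - α) * wiener G / n ≤ alphaDistEnergy G α hA := by
  obtain rfl | hn := n.eq_zero_or_pos
  · simp [alphaDistEnergy]
  have : NeZero n := ⟨hn.ne'⟩
  have hn0 : (0 : ℝ) < n := by exact_mod_cast hn
  have hsum := sum_eigenvalues_sub_eq_zero G α hA
  set c := 2 * α * wiener G / n
  obtain ⟨m, hm⟩ := Finite.exists_max hA.eigenvalues
  have hray : 2 * wiener G / n ≤ hA.eigenvalues m := by
    have := hA.dotProduct_mulVec_le hm 1
    rw [ones_dotProduct_alphaDistMatrix_mulVec_ones] at this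
    rw [div_le_iff₀ hn0]
    simpa using this
  calc 4 * (1 - α) * wiener G / n = 2 * (2 * wiener G / n - c) := by ring
    _ ≤ 2 * (hA.eigenvalues m - c) := by gcongr
    _ ≤ alphaDistEnergy G α hA := two_mul_le_sum_abs_of_sum_eq_zero hsum m

end

section
variable {n : ℕ} (α : ℝ)

theorem alphaDistMatrix_top :
    alphaDistMatrix (⊤ : SimpleGraph (Fin n)) α =
      (1 - α) • of 1 + (α * n - 1) • 1 := by
  ext i j
  by_cases h : i = j
  · subst h
    simp [alphaDistMatrix, distMatrix, transmission, SimpleGraph.dist_top, sum_ite, filter_ne,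
      Nat.cast_pred i.pos]
    ring
  · simp [alphaDistMatrix, distMatrix, SimpleGraph.dist_top_of_ne h, h]

theorem alphaDistMatrix_top_sub_mul_sub :
    (alphaDistMatrix (⊤ : SimpleGraph (Fin n)) α - ((n : ℝ) - 1) • 1) *
      (alphaDistMatrix ⊤ α - (α * n - 1) • 1) = 0 := by
  have hJ : (of 1 * of 1 : Matrix (Fin n) (Fin n) ℝ) = (n : ℝ) • of 1 := by
    ext i j; simp [Matrix.mul_apply]
  have hfirst : (1 - α) • of 1 + (α * n - 1) • 1 - ((n : ℝ) - 1) • 1 =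
      (1 - α) • (of 1 - (n : ℝ) • 1 : Matrix (Fin n) (Fin n) ℝ) := by module
  rw [alphaDistMatrix_top, hfirst, add_sub_cancel_right, smul_mul_smul_comm]
  simp [sub_mul, hJ]

theorem alphaDistEnergy_top (hn : 0 < n) (hα : α < 1)
    (hA : (alphaDistMatrix (⊤ : SimpleGraph (Fin n)) α).IsHermitian) :
    alphaDistEnergy ⊤ α hA = 2 * (1 - α) * (n - 1) := by
  have hn1 : (1 : ℝ) ≤ n := by exact_mod_cast hn
  have hn0 : (n : ℝ) ≠ 0 := by positivity
  have hα1 : 1 - α ≠ 0 := by linarith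
  have hc : 2 * α * wiener (⊤ : SimpleGraph (Fin n)) / n = α * (n - 1) := by
    rw [wiener_top]; field_simp
  have hsum := sum_eigenvalues_sub_eq_zero (⊤ : SimpleGraph (Fin n)) α hA
  have hvals (i : Fin n) :
      hA.eigenvalues i - α * (n - 1) = (1 - α) * (n - 1) ∨
        hA.eigenvalues i - α * (n - 1) = -(1 - α) := by
    rcases hA.eigenvalues_eq_or_eq (alphaDistMatrix_top_sub_mul_sub α) i with h | h <;>
      rw [h] <;> [left; right] <;> ring
  rw [hc] at hsum
  rw [alphaDistEnergy, hc, sum_abs_of_forall_eq_or_eq_neg (by nlinarith) (by linarith)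
    (by nlinarith) hvals hsum, Fintype.card_fin, ← mul_add_one, sub_add_cancel]
  field_simp

end

theorem stmt_2 {n : ℕ} (hn : 2 ≤ n) (G : SimpleGraph (Fin n)) (hG : G.Connected)
    (α : ℝ) (hα : α ∈ Set.Ico (1 / 2 : ℝ) 1)
    (hA : (alphaDistMatrix G α).IsHermitian) :
    2 * (1 - α) * ((n : ℝ) - 1) ≤ ∑ i, |hA.eigenvalues i - 2 * α * wiener G / n| ∧
      ((∑ i, |hA.eigenvalues i - 2 * α * wiener G / n|) = 2 * (1 - α) * ((n : ℝ) - 1) ↔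
        G = ⊤) := by
  change _ ≤ alphaDistEnergy G α hA ∧ (alphaDistEnergy G α hA = _ ↔ _)
  have hα1 : 0 < 1 - α := by linarith [hα.2]
  have hK : 4 * (1 - α) * wiener (⊤ : SimpleGraph (Fin n)) / n = 2 * (1 - α) * (n - 1) := by
    rw [wiener_top]; field_simp; ring
  have hlow := four_mul_wiener_le_alphaDistEnergy G α hA
  refine ⟨?_, fun heq => by_contra fun hne => ?_, ?_⟩
  · calc 2 * (1 - α) * ((n : ℝ) - 1)
          = 4 * (1 - α) * wiener (⊤ : SimpleGraph (Fin n)) / n := hK.symm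
      _ ≤ 4 * (1 - α) * wiener G / n := by gcongr; exact wiener_top_le hG
      _ ≤ alphaDistEnergy G α hA := hlow
  · have : 4 * (1 - α) * wiener (⊤ : SimpleGraph (Fin n)) / n < 4 * (1 - α) * wiener G / n := by
      gcongr; exact wiener_top_lt hG hne
    linarith
  · rintro rfl
    exact alphaDistEnergy_top α (by omega) hα.2 hA
end

section
/- Let G be a simple undirected connected graph with n ≥ 2 vertices and α ∈ [0,1]. Then the α-distance energy satisfies ς_α(G) ≤ √(n·Z(G)), where Z(G) = (1−α)²‖D(G)‖_F² + α² Σ_{i=1}^n (Tr(v_i) − 2W(G)/n)². -/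
/-!
Shifting a symmetric matrix by a scalar shifts its eigenvalues, so by the spectral theorem
`∑ (σᵢ - c)²` is the squared Frobenius norm of `D_α(G) - c I`. For `c = 2αW(G)/n` the
diagonal of this matrix is `α (Tr(vᵢ) - 2W(G)/n)` and its off-diagonal part is `(1 - α) D(G)`,
so the squared norm is `Z(G)`; Cauchy–Schwarz then bounds `∑ |σᵢ - c|` by `√(n Z(G))`.
-/

open Finset Matrix Polynomial Real

theorem Finset.sum_abs_le_sqrt_card_mul_sum_sq {ι : Type*} (s : Finset ι) (f : ι → ℝ) :
    ∑ i ∈ s, |f i| ≤ √(#s * ∑ i ∈ s, f i ^ 2) :=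
  Real.le_sqrt_of_sq_le <| by
    simpa only [sq_abs] using sq_sum_le_card_mul_sum_sq (s := s) (f := fun i => |f i|)

namespace Matrix

variable {ι : Type*} [Fintype ι]

theorem trace_mul_transpose_self (M : Matrix ι ι ℝ) :
    (M * Mᵀ).trace = ∑ i, ∑ j, M i j ^ 2 := by
  simp only [trace, diag_apply, mul_apply, transpose_apply, sq]

variable [DecidableEq ι]

theorem sum_sq_diagonal_add_of_diag_eq_zero {M : Matrix ι ι ℝ} (hM : ∀ i, M i i = 0)
    (d : ι → ℝ) :
    ∑ i, ∑ j, (diagonal d + M) i j ^ 2 = ∑ i, d i ^ 2 + ∑ i, ∑ j, M i j ^ 2 := by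
  have hentry : ∀ i j, (diagonal d + M) i j ^ 2 = (if i = j then d i ^ 2 else 0) + M i j ^ 2 := by
    intro i j
    by_cases h : i = j
    · subst h; simp [hM]
    · simp [h]
  simp only [hentry, sum_add_distrib, sum_ite_eq, mem_univ, if_true]

theorem trace_conjStarAlgAut {R : Type*} [CommRing R] [StarRing R] (U : unitary (Matrix ι ι R))
    (X : Matrix ι ι R) : (Unitary.conjStarAlgAut R _ U X).trace = X.trace := by
  rw [Unitary.conjStarAlgAut_apply, trace_mul_cycle, Unitary.coe_star_mul_self, Matrix.one_mul]

theorem IsHermitian.sum_sq_eigenvalues_sub {A : Matrix ι ι ℝ} (hA : A.IsHermitian) (c : ℝ) :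
    ∑ i, (hA.eigenvalues i - c) ^ 2 = ∑ i, ∑ j, (A - c • 1) i j ^ 2 := by
  set φ := Unitary.conjStarAlgAut ℝ (Matrix ι ι ℝ) hA.eigenvectorUnitary
  set D := diagonal fun i => hA.eigenvalues i - c
  have hspectral : A = φ (diagonal hA.eigenvalues) := by simpa [φ] using hA.spectral_theorem
  have hshift : A - c • 1 = φ D := by
    have hD : D = diagonal hA.eigenvalues - c • 1 := by
      ext i j; by_cases h : i = j <;> simp [D, h]
    rw [hD, map_sub, map_smul, map_one, ← hspectral]
  rw [← trace_mul_transpose_self, hshift, ← conjTranspose_eq_transpose_of_trivial,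
    ← star_eq_conjTranspose, ← map_star, ← map_mul, trace_conjStarAlgAut,
    star_eq_conjTranspose, diagonal_conjTranspose, diagonal_mul_diagonal, trace_diagonal]
  simp [sq]

end Matrix

theorem frobNorm_sq {n : ℕ} (M : Matrix (Fin n) (Fin n) ℝ) :
    frobNorm M ^ 2 = ∑ i, ∑ j, M i j ^ 2 :=
  Real.sq_sqrt (by positivity)

theorem alphaDistMatrix_sub_smul_one {n : ℕ} (G : SimpleGraph (Fin n)) (α c : ℝ) :
    alphaDistMatrix G α - c • 1 =
      diagonal (fun i => α * transmission G i - c) + (1 - α) • distMatrix G := by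
  ext i j
  by_cases h : i = j
  · subst h; simp [alphaDistMatrix, distMatrix]
  · simp [alphaDistMatrix, h]

theorem stmt_5_general {n : ℕ} (G : SimpleGraph (Fin n))
    (α : ℝ)
    (hA : (alphaDistMatrix G α).IsHermitian) :
    (∑ i, |hA.eigenvalues i - 2 * α * wiener G / n|) ≤
      Real.sqrt ((n : ℝ) *
        ((1 - α) ^ 2 * (frobNorm (distMatrix G)) ^ 2 +
          α ^ 2 * ∑ i, (transmission G i - 2 * wiener G / n) ^ 2)) := by
  have hdist : ∀ i, ((1 - α) • distMatrix G) i i = 0 := by simp [distMatrix]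
  have hZ : ∑ i, (hA.eigenvalues i - 2 * α * wiener G / n) ^ 2 =
      (1 - α) ^ 2 * frobNorm (distMatrix G) ^ 2 +
        α ^ 2 * ∑ i, (transmission G i - 2 * wiener G / n) ^ 2 := by
    rw [hA.sum_sq_eigenvalues_sub, alphaDistMatrix_sub_smul_one,
      sum_sq_diagonal_add_of_diag_eq_zero hdist, frobNorm_sq, mul_sum, mul_sum, add_comm]
    simp only [Matrix.smul_apply, smul_eq_mul, mul_pow, mul_sum]
    congr 1
    exact sum_congr rfl fun i _ => by ring
  simpa [hZ] using
    sum_abs_le_sqrt_card_mul_sum_sq univ fun i => hA.eigenvalues i - 2 * α * wiener G / n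

theorem stmt_5 {n : ℕ} (hn : 2 ≤ n) (G : SimpleGraph (Fin n)) (hG : G.Connected)
    (α : ℝ) (hα : α ∈ Set.Icc (0 : ℝ) 1)
    (hA : (alphaDistMatrix G α).IsHermitian) :
    (∑ i, |hA.eigenvalues i - 2 * α * wiener G / n|) ≤
      Real.sqrt ((n : ℝ) *
        ((1 - α) ^ 2 * (frobNorm (distMatrix G)) ^ 2 +
          α ^ 2 * ∑ i, (transmission G i - 2 * wiener G / n) ^ 2)) :=
  stmt_5_general G α hA
end

section
/- Let G be a simple undirected connected graph with n ≥ 2 vertices and α ∈ [0,1]. Then ς_α(G) ≤ √( (α² Σ_{i=1}^n Tr(v_i)² + 2(1−α)² S)·n − 4α² W(G)² ), where S = Σ_{1≤i<j≤n} d(v_i,v_j)². -/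
open Finset Matrix Polynomial Real

/-- `S = ∑_{i<j} d(v_i,v_j)²`. -/
noncomputable def distSq {n : ℕ} (G : SimpleGraph (Fin n)) : ℝ :=
  ∑ p ∈ Finset.univ.filter (fun p : Fin n × Fin n => p.1 < p.2), (G.dist p.1 p.2 : ℝ) ^ 2

/-! The eigenvalues of `D_α` have mean `μ = 2αW/n`, because `tr D_α = α ∑ Tr(v_i) = 2αW`.
Cauchy–Schwarz gives `(∑ |σ_i - μ|)² ≤ n ∑ (σ_i - μ)² = n ∑ σ_i² - (∑ σ_i)²`, and for a symmetric
matrix `∑ σ_i²` is the squared Frobenius norm, which for `D_α` is `α² ∑ Tr(v_i)² + 2(1-α)² S`. -/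

namespace Matrix

variable {n 𝕜 : Type*} [Fintype n] [DecidableEq n] [RCLike 𝕜]

theorem trace_conjStarAlgAut_s6 (u : unitaryGroup n 𝕜) (M : Matrix n n 𝕜) :
    (Unitary.conjStarAlgAut 𝕜 _ u M).trace = M.trace := by
  rw [Unitary.conjStarAlgAut_apply, trace_mul_cycle, Unitary.coe_star_mul_self, one_mul]

theorem IsHermitian.sum_eigenvalues_sq {A : Matrix n n 𝕜} (hA : A.IsHermitian) :
    ∑ i, (hA.eigenvalues i : 𝕜) ^ 2 = (A * A).trace := by
  conv_rhs => rw [hA.spectral_theorem, ← map_mul, trace_conjStarAlgAut_s6, diagonal_mul_diagonal]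
  simp [sq]

theorem IsHermitian.sum_eigenvalues_sq_eq_sum_sq {A : Matrix n n ℝ} (hA : A.IsHermitian) :
    ∑ i, hA.eigenvalues i ^ 2 = ∑ i, ∑ j, A i j ^ 2 := by
  have h := hA.sum_eigenvalues_sq
  simp only [RCLike.ofReal_real_eq_id, id] at h
  rw [h]
  simp only [trace, diag_apply, mul_apply, sq]
  refine Finset.sum_congr rfl fun i _ => Finset.sum_congr rfl fun j _ => ?_
  rw [← hA.apply j i, star_trivial]

end Matrix

theorem Finset.sum_sum_eq_two_nsmul_sum_lt {ι M : Type*} [Fintype ι] [LinearOrder ι]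
    [AddCommMonoid M] (f : ι → ι → M) (hsymm : ∀ i j, f i j = f j i) (hdiag : ∀ i, f i i = 0) :
    ∑ i, ∑ j, f i j = 2 • ∑ p ∈ univ.filter (fun p : ι × ι => p.1 < p.2), f p.1 p.2 := by
  have hsplit : ∀ i j, f i j = (if i < j then f i j else 0) + (if j < i then f j i else 0) := by
    intro i j
    rcases lt_trichotomy i j with h | rfl | h
    · simp [h, h.not_gt]
    · simp [hdiag]
    · simp [h, h.not_gt, hsymm i j]
  conv_lhs => enter [2, i, 2, j]; rw [hsplit i j]
  simp only [Finset.sum_add_distrib]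
  rw [Finset.sum_comm (f := fun i j => if j < i then f j i else 0), two_nsmul,
    Finset.sum_filter, Fintype.sum_prod_type]

theorem sum_abs_sub_mean_le_sqrt {ι : Type*} [Fintype ι] (x : ι → ℝ) :
    ∑ i, |x i - (∑ j, x j) / Fintype.card ι| ≤
      √((∑ i, x i ^ 2) * Fintype.card ι - (∑ i, x i) ^ 2) := by
  have hvariance : (Fintype.card ι : ℝ) * ∑ i, (x i - (∑ j, x j) / Fintype.card ι) ^ 2 =
      (∑ i, x i ^ 2) * Fintype.card ι - (∑ i, x i) ^ 2 := by
    rcases isEmpty_or_nonempty ι with _ | _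
    · simp
    have hN : (Fintype.card ι : ℝ) ≠ 0 := by positivity
    simp only [sub_sq, Finset.sum_add_distrib, Finset.sum_sub_distrib, ← Finset.sum_mul,
      ← Finset.mul_sum, Finset.sum_const, Finset.card_univ, nsmul_eq_mul]
    field_simp
    ring
  have hcauchy := sq_sum_le_card_mul_sum_sq (s := univ)
    (f := fun i => |x i - (∑ j, x j) / Fintype.card ι|)
  simp only [sq_abs, Finset.card_univ] at hcauchy
  rw [← hvariance]
  exact Real.le_sqrt_of_sq_le hcauchy

section AlphaDistance

variable {n : ℕ} (G : SimpleGraph (Fin n)) (α : ℝ)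

theorem alphaDistMatrix_apply_self (i : Fin n) :
    alphaDistMatrix G α i i = α * transmission G i := by
  simp [alphaDistMatrix, distMatrix]

theorem alphaDistMatrix_apply_of_ne {i j : Fin n} (h : i ≠ j) :
    alphaDistMatrix G α i j = (1 - α) * G.dist i j := by
  simp [alphaDistMatrix, distMatrix, h]

theorem sum_sq_dist : ∑ i, ∑ j, (G.dist i j : ℝ) ^ 2 = 2 * distSq G := by
  rw [Finset.sum_sum_eq_two_nsmul_sum_lt _ (fun i j => by rw [G.dist_comm])
    (fun i => by simp), two_nsmul, two_mul, distSq]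

theorem sum_sq_alphaDistMatrix :
    ∑ i, ∑ j, alphaDistMatrix G α i j ^ 2 =
      α ^ 2 * ∑ i, transmission G i ^ 2 + 2 * (1 - α) ^ 2 * distSq G := by
  have hentry : ∀ i j, alphaDistMatrix G α i j ^ 2 =
      α ^ 2 * (if i = j then transmission G i ^ 2 else 0) + (1 - α) ^ 2 * (G.dist i j : ℝ) ^ 2 := by
    intro i j
    by_cases h : i = j
    · simp [h, alphaDistMatrix_apply_self, mul_pow]
    · simp [h, alphaDistMatrix_apply_of_ne, mul_pow]
  simp only [hentry, Finset.sum_add_distrib, ← Finset.mul_sum, Finset.sum_ite_eq, Finset.mem_univ,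
    if_true, sum_sq_dist]
  ring

end AlphaDistance

theorem stmt_6_general {n : ℕ} (G : SimpleGraph (Fin n))
    (α : ℝ)
    (hA : (alphaDistMatrix G α).IsHermitian) :
    (∑ i, |hA.eigenvalues i - 2 * α * wiener G / n|) ≤
      Real.sqrt ((α ^ 2 * (∑ i, (transmission G i) ^ 2) + 2 * (1 - α) ^ 2 * distSq G) * (n : ℝ)
        - 4 * α ^ 2 * (wiener G) ^ 2) := by
  have hsum : ∑ i, hA.eigenvalues i = 2 * α * wiener G := by
    simpa using (hA.trace_eq_sum_eigenvalues.symm.trans (trace_alphaDistMatrix G α))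
  have hsum_sq : ∑ i, hA.eigenvalues i ^ 2 =
      α ^ 2 * ∑ i, transmission G i ^ 2 + 2 * (1 - α) ^ 2 * distSq G := by
    rw [hA.sum_eigenvalues_sq_eq_sum_sq, sum_sq_alphaDistMatrix]
  have h := sum_abs_sub_mean_le_sqrt hA.eigenvalues
  rw [hsum, hsum_sq, Fintype.card_fin] at h
  convert h using 3
  ring

theorem stmt_6 {n : ℕ} (hn : 2 ≤ n) (G : SimpleGraph (Fin n)) (hG : G.Connected)
    (α : ℝ) (hα : α ∈ Set.Icc (0 : ℝ) 1)
    (hA : (alphaDistMatrix G α).IsHermitian) :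
    (∑ i, |hA.eigenvalues i - 2 * α * wiener G / n|) ≤
      Real.sqrt ((α ^ 2 * (∑ i, (transmission G i) ^ 2) + 2 * (1 - α) ^ 2 * distSq G) * (n : ℝ)
        - 4 * α ^ 2 * (wiener G) ^ 2) :=
  stmt_6_general G α hA
end

section
/- Let G be a simple undirected connected graph with n ≥ 2 vertices, and set T = max_{v∈V(G)} Tr(v) and t = min_{v∈V(G)} Tr(v). Then for every vertex u of G: 2W(G) + (t−1)·Tr(u) − (n−1)·t ≤ Σ_{v≠u} d(u,v)·Tr(v) ≤ 2W(G) + (T−1)·Tr(u) − (n−1)·T. -/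
open Finset Matrix Polynomial Real

/-! For `v ≠ u` we have `d(u,v) ≥ 1`, so `(d(u,v) - 1)(Tr(v) - t) ≥ 0` and `(d(u,v) - 1)(T - Tr(v)) ≥ 0`.
Summing over `v ≠ u`, with `∑_{v ≠ u} Tr(v) = 2W(G) - Tr(u)` and `∑_{v ≠ u} (d(u,v) - 1) = Tr(u) - (n - 1)`,
gives both bounds. -/

section WeightedSum

variable {ι : Type*} {s : Finset ι} {d x : ι → ℝ}

theorem sum_add_sum_sub_card_mul_le_sum_mul {m : ℝ} (hd : ∀ i ∈ s, 1 ≤ d i)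
    (hm : ∀ i ∈ s, m ≤ x i) :
    ∑ i ∈ s, x i + (∑ i ∈ s, d i - #s) * m ≤ ∑ i ∈ s, d i * x i := by
  have hpointwise : ∀ i ∈ s, x i + (d i - 1) * m ≤ d i * x i := fun i hi => by
    nlinarith [mul_nonneg (sub_nonneg.2 (hd i hi)) (sub_nonneg.2 (hm i hi))]
  calc ∑ i ∈ s, x i + (∑ i ∈ s, d i - #s) * m = ∑ i ∈ s, (x i + (d i - 1) * m) := by
        simp only [sum_add_distrib, ← sum_mul, sum_sub_distrib, sum_const, nsmul_one]
    _ ≤ ∑ i ∈ s, d i * x i := sum_le_sum hpointwise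

theorem sum_mul_le_sum_add_sum_sub_card_mul {M : ℝ} (hd : ∀ i ∈ s, 1 ≤ d i)
    (hM : ∀ i ∈ s, x i ≤ M) :
    ∑ i ∈ s, d i * x i ≤ ∑ i ∈ s, x i + (∑ i ∈ s, d i - #s) * M := by
  have hpointwise : ∀ i ∈ s, d i * x i ≤ x i + (d i - 1) * M := fun i hi => by
    nlinarith [mul_nonneg (sub_nonneg.2 (hd i hi)) (sub_nonneg.2 (hM i hi))]
  calc ∑ i ∈ s, d i * x i ≤ ∑ i ∈ s, (x i + (d i - 1) * M) := sum_le_sum hpointwise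
    _ = ∑ i ∈ s, x i + (∑ i ∈ s, d i - #s) * M := by
        simp only [sum_add_distrib, ← sum_mul, sum_sub_distrib, sum_const, nsmul_one]

end WeightedSum

section Transmission

variable {n : ℕ} (G : SimpleGraph (Fin n))

theorem sum_transmission_eq_two_mul_wiener : ∑ v, transmission G v = 2 * wiener G := by
  simp only [wiener, transmission]
  ring

theorem sum_transmission_erase (u : Fin n) :
    ∑ v ∈ univ.erase u, transmission G v = 2 * wiener G - transmission G u := by
  rw [sum_erase_eq_sub (mem_univ u), sum_transmission_eq_two_mul_wiener]

theorem sum_dist_erase (u : Fin n) :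
    ∑ v ∈ univ.erase u, (G.dist u v : ℝ) = transmission G u := by
  simp [sum_erase_eq_sub (mem_univ u), transmission]

theorem sInf_range_transmission_le (v : Fin n) :
    sInf (Set.range (transmission G)) ≤ transmission G v :=
  ciInf_le (Set.finite_range _).bddBelow v

theorem transmission_le_sSup_range (v : Fin n) :
    transmission G v ≤ sSup (Set.range (transmission G)) :=
  le_ciSup (Set.finite_range _).bddAbove v

end Transmission

theorem stmt_10_general {n : ℕ} (G : SimpleGraph (Fin n)) (hG : G.Connected)
    (u : Fin n) :
    2 * wiener G + (sInf (Set.range (transmission G)) - 1) * transmission G u -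
        ((n : ℝ) - 1) * sInf (Set.range (transmission G)) ≤
      (∑ v ∈ Finset.univ.filter (fun v => v ≠ u), (G.dist u v : ℝ) * transmission G v) ∧
    (∑ v ∈ Finset.univ.filter (fun v => v ≠ u), (G.dist u v : ℝ) * transmission G v) ≤
      2 * wiener G + (sSup (Set.range (transmission G)) - 1) * transmission G u -
        ((n : ℝ) - 1) * sSup (Set.range (transmission G)) := by
  rw [filter_ne']
  have hdist : ∀ v ∈ univ.erase u, 1 ≤ (G.dist u v : ℝ) := fun v hv => by
    exact_mod_cast hG.pos_dist_of_ne (ne_of_mem_erase hv).symm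
  have hcard : (#(univ.erase u) : ℝ) = n - 1 := by
    rw [cast_card_erase_of_mem (mem_univ u), card_univ, Fintype.card_fin]
  have hlower := sum_add_sum_sub_card_mul_le_sum_mul hdist
    fun v _ => sInf_range_transmission_le G v
  have hupper := sum_mul_le_sum_add_sum_sub_card_mul hdist
    fun v _ => transmission_le_sSup_range G v
  rw [sum_transmission_erase, sum_dist_erase, hcard] at hlower hupper
  constructor <;> linarith

theorem stmt_10 {n : ℕ} (hn : 2 ≤ n) (G : SimpleGraph (Fin n)) (hG : G.Connected)
    (u : Fin n) :
    2 * wiener G + (sInf (Set.range (transmission G)) - 1) * transmission G u -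
        ((n : ℝ) - 1) * sInf (Set.range (transmission G)) ≤
      (∑ v ∈ Finset.univ.filter (fun v => v ≠ u), (G.dist u v : ℝ) * transmission G v) ∧
    (∑ v ∈ Finset.univ.filter (fun v => v ≠ u), (G.dist u v : ℝ) * transmission G v) ≤
      2 * wiener G + (sSup (Set.range (transmission G)) - 1) * transmission G u -
        ((n : ℝ) - 1) * sSup (Set.range (transmission G)) :=
  stmt_10_general G hG u
end

section
/- Let G be a simple undirected connected graph with n ≥ 2 vertices and α ∈ [0,1]. Let σ_1(G) and σ_n(G) be the largest and smallest eigenvalues of D_α(G). Then for every vertex v_i of G: σ_1(G) − σ_n(G) ≥ √( (2W(G) + (αn − 2)Tr(v_i))² − 4(n−1)(2α·Tr(v_i)·W(G) − Tr(v_i)²) ) / (n−1). -/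
open Finset Matrix Polynomial Real

/-!
On vectors that take one value `y₁` at `v_i` and another value `y₂` elsewhere, the quadratic form
of `D_α` is the binary form `α T y₁² + 2 (1 - α) T y₁ y₂ + (2W - (2 - α) T) y₂²` (with
`T = Tr(v_i)`), read off from the diagonal entry, the row sums and the total sum of `D_α`, while
the squared norm is `y₁² + (n - 1) y₂²`. By the Rayleigh principle this binary form lies between
`σ_n` and `σ_1` times the norm, so both eigenvalues of the corresponding `2 × 2` matrix lie in
`[σ_n, σ_1]`; the right-hand side of the theorem is exactly the gap between these two eigenvalues.
-/

section Rayleigh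

open scoped MatrixOrder

variable {ι : Type*} [Fintype ι] [DecidableEq ι] {A : Matrix ι ι ℝ}

theorem Matrix.IsHermitian.mul_dotProduct_self_le_dotProduct_mulVec (hA : A.IsHermitian)
    {lo : ℝ} (hlo : ∀ k, lo ≤ hA.eigenvalues k) (x : ι → ℝ) :
    lo * (x ⬝ᵥ x) ≤ x ⬝ᵥ A *ᵥ x := by
  have hle : algebraMap ℝ _ lo ≤ A := by
    rw [algebraMap_le_iff_le_spectrum (ha := hA), hA.spectrum_real_eq_range_eigenvalues]
    rintro _ ⟨k, rfl⟩
    exact hlo k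
  simpa [sub_mulVec, Algebra.algebraMap_eq_smul_one, smul_mulVec] using
    (Matrix.le_iff.mp hle).dotProduct_mulVec_nonneg x

theorem Matrix.IsHermitian.dotProduct_mulVec_le_mul_dotProduct_self (hA : A.IsHermitian)
    {hi : ℝ} (hhi : ∀ k, hA.eigenvalues k ≤ hi) (x : ι → ℝ) :
    x ⬝ᵥ A *ᵥ x ≤ hi * (x ⬝ᵥ x) := by
  have hle : A ≤ algebraMap ℝ _ hi := by
    rw [le_algebraMap_iff_spectrum_le (ha := hA), hA.spectrum_real_eq_range_eigenvalues]
    rintro _ ⟨k, rfl⟩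
    exact hhi k
  simpa [sub_mulVec, Algebra.algebraMap_eq_smul_one, smul_mulVec] using
    (Matrix.le_iff.mp hle).dotProduct_mulVec_nonneg x

end Rayleigh

theorem Matrix.dotProduct_mulVec_update_const {ι : Type*} [Fintype ι] [DecidableEq ι]
    (A : Matrix ι ι ℝ) (i : ι) (y₁ y₂ : ℝ) :
    Function.update (fun _ => y₂) i y₁ ⬝ᵥ A *ᵥ Function.update (fun _ => y₂) i y₁ =
      y₂ ^ 2 * ∑ j, ∑ k, A j k + y₂ * (y₁ - y₂) * (∑ k, A i k + ∑ j, A j i)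
        + (y₁ - y₂) ^ 2 * A i i := by
  have hx : Function.update (fun _ => y₂) i y₁ = (fun _ => y₂) + Pi.single i (y₁ - y₂) := by
    ext j
    by_cases h : j = i <;> simp [h]
  rw [hx]
  simp only [mulVec_add, dotProduct_add, add_dotProduct, mulVec_single, single_dotProduct]
  simp only [dotProduct, mulVec, Pi.smul_apply, col_apply, MulOpposite.smul_eq_mul_unop,
    MulOpposite.unop_op, Finset.mul_sum, mul_add]
  ring_nf

theorem Matrix.dotProduct_self_update_const {ι : Type*} [Fintype ι] [DecidableEq ι] (i : ι)
    (y₁ y₂ : ℝ) :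
    Function.update (fun _ => y₂) i y₁ ⬝ᵥ Function.update (fun _ => y₂) i y₁ =
      y₁ ^ 2 + ((Fintype.card ι : ℝ) - 1) * y₂ ^ 2 := by
  have := dotProduct_mulVec_update_const 1 i y₁ y₂
  simp only [one_mulVec, one_apply, sum_ite_eq, sum_ite_eq', mem_univ, if_true, sum_const,
    card_univ, nsmul_eq_mul, mul_one] at this
  rw [this]
  ring

theorem sq_le_mul_of_binaryForm_nonneg {c₁ b c₂ : ℝ}
    (h : ∀ y₁ y₂ : ℝ, 0 ≤ c₁ * y₁ ^ 2 + 2 * b * y₁ * y₂ + c₂ * y₂ ^ 2) :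
    b ^ 2 ≤ c₁ * c₂ := by
  have := discrim_le_zero fun y => (h y 1).trans_eq (by ring : _ = c₁ * (y * y) + 2 * b * y + c₂)
  rw [discrim] at this
  linarith

theorem sq_sub_add_four_mul_le_sq {P X Y B : ℝ} (hX : 0 ≤ X) (hY : 0 ≤ Y) (hXP : X ≤ P)
    (hYP : Y ≤ P) (hB : 0 ≤ B) (h₁ : B ≤ X * Y) (h₂ : B ≤ (P - X) * (P - Y)) :
    (X - Y) ^ 2 + 4 * B ≤ P ^ 2 := by
  -- `P² - (X - Y)² = ((P - X) + Y) (X + (P - Y))`, and AM-GM bounds each factor from below.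
  have hsq : (4 * B) ^ 2 ≤ ((P - X + Y) * (P + X - Y)) ^ 2 :=
    calc (4 * B) ^ 2 = 16 * (B * B) := by ring
      _ ≤ 16 * ((X * Y) * ((P - X) * (P - Y))) := by gcongr
      _ = (4 * (P - X) * Y) * (4 * X * (P - Y)) := by ring
      _ ≤ (P - X + Y) ^ 2 * (X + (P - Y)) ^ 2 := by
        apply mul_le_mul (four_mul_le_sq_add _ _) (four_mul_le_sq_add _ _) <;> positivity
      _ = ((P - X + Y) * (P + X - Y)) ^ 2 := by ring
  have := (pow_le_pow_iff_left₀ (by positivity) (by nlinarith) two_ne_zero).mp hsq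
  nlinarith

theorem sq_sub_add_four_mul_sq_le_of_binaryForm_bounds {m a b s lo hi : ℝ} (hm : 0 < m)
    (hlo : ∀ y₁ y₂ : ℝ, lo * (y₁ ^ 2 + m * y₂ ^ 2) ≤ a * y₁ ^ 2 + 2 * b * y₁ * y₂ + s * y₂ ^ 2)
    (hhi : ∀ y₁ y₂ : ℝ, a * y₁ ^ 2 + 2 * b * y₁ * y₂ + s * y₂ ^ 2 ≤ hi * (y₁ ^ 2 + m * y₂ ^ 2)) :
    (m * a - s) ^ 2 + 4 * m * b ^ 2 ≤ (m * (hi - lo)) ^ 2 := by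
  have ha_lo : lo ≤ a := by simpa using hlo 1 0
  have ha_hi : a ≤ hi := by simpa using hhi 1 0
  have hs_lo : lo * m ≤ s := by simpa using hlo 0 1
  have hs_hi : s ≤ hi * m := by simpa using hhi 0 1
  have hb_lo : b ^ 2 ≤ (a - lo) * (s - m * lo) :=
    sq_le_mul_of_binaryForm_nonneg fun y₁ y₂ => by linarith [hlo y₁ y₂]
  have hb_hi : (-b) ^ 2 ≤ (hi - a) * (m * hi - s) :=
    sq_le_mul_of_binaryForm_nonneg fun y₁ y₂ => by linarith [hhi y₁ y₂]
  have := sq_sub_add_four_mul_le_sq (P := m * (hi - lo)) (X := m * (a - lo)) (Y := s - m * lo)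
    (B := m * b ^ 2) (by nlinarith) (by linarith) (by nlinarith) (by linarith) (by positivity)
    (by nlinarith) (by nlinarith)
  linear_combination this

section AlphaDistance

variable {n : ℕ} (G : SimpleGraph (Fin n)) (α : ℝ)

theorem sum_alphaDistMatrix_row (i : Fin n) :
    ∑ k, alphaDistMatrix G α i k = transmission G i := by
  simp [alphaDistMatrix, distMatrix, diagonal_apply, Finset.sum_add_distrib, ← Finset.mul_sum,
    transmission]
  ring

theorem sum_alphaDistMatrix_col (i : Fin n) :
    ∑ j, alphaDistMatrix G α j i = transmission G i := by
  simp [alphaDistMatrix, distMatrix, diagonal_apply, Finset.sum_add_distrib, ← Finset.mul_sum,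
    transmission, SimpleGraph.dist_comm]
  ring

theorem sum_sum_alphaDistMatrix :
    ∑ j, ∑ k, alphaDistMatrix G α j k = 2 * wiener G := by
  simp only [sum_alphaDistMatrix_row, transmission, wiener]
  ring

end AlphaDistance

theorem stmt_13_general {n : ℕ} (hn : 2 ≤ n) (G : SimpleGraph (Fin n)) (α : ℝ)
    (hA : (alphaDistMatrix G α).IsHermitian) (σ₁ σₙ : ℝ)
    (hσ₁ : IsGreatest (Set.range hA.eigenvalues) σ₁)
    (hσₙ : IsLeast (Set.range hA.eigenvalues) σₙ) (i : Fin n) :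
    Real.sqrt ((2 * wiener G + (α * (n : ℝ) - 2) * transmission G i) ^ 2 -
        4 * ((n : ℝ) - 1) *
          (2 * α * transmission G i * wiener G - (transmission G i) ^ 2)) / ((n : ℝ) - 1) ≤
      σ₁ - σₙ := by
  set T := transmission G i
  have hm : 0 < (n : ℝ) - 1 := by
    have : (2 : ℝ) ≤ n := by exact_mod_cast hn
    linarith
  have hform (y₁ y₂ : ℝ) :
      Function.update (fun _ => y₂) i y₁ ⬝ᵥ alphaDistMatrix G α *ᵥ
          Function.update (fun _ => y₂) i y₁ =
        α * T * y₁ ^ 2 + 2 * ((1 - α) * T) * y₁ * y₂ + (2 * wiener G - (2 - α) * T) * y₂ ^ 2 := by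
    rw [dotProduct_mulVec_update_const, sum_sum_alphaDistMatrix, sum_alphaDistMatrix_row,
      sum_alphaDistMatrix_col, alphaDistMatrix_apply_self]
    ring
  have hnorm (y₁ y₂ : ℝ) := dotProduct_self_update_const i y₁ y₂
  rw [Fintype.card_fin] at hnorm
  have hspread := sq_sub_add_four_mul_sq_le_of_binaryForm_bounds hm
    (fun y₁ y₂ => hform y₁ y₂ ▸ hnorm y₁ y₂ ▸
      hA.mul_dotProduct_self_le_dotProduct_mulVec (fun k => hσₙ.2 ⟨k, rfl⟩) _)
    (fun y₁ y₂ => hform y₁ y₂ ▸ hnorm y₁ y₂ ▸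
      hA.dotProduct_mulVec_le_mul_dotProduct_self (fun k => hσ₁.2 ⟨k, rfl⟩) _)
  have hσ : 0 ≤ ((n : ℝ) - 1) * (σ₁ - σₙ) := mul_nonneg hm.le (sub_nonneg.2 (hσₙ.2 hσ₁.1))
  rw [div_le_iff₀ hm]
  calc _ = √((((n : ℝ) - 1) * (α * T) - (2 * wiener G - (2 - α) * T)) ^ 2
          + 4 * ((n : ℝ) - 1) * ((1 - α) * T) ^ 2) := by congr 1; ring
    _ ≤ √((((n : ℝ) - 1) * (σ₁ - σₙ)) ^ 2) := Real.sqrt_le_sqrt hspread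
    _ = (σ₁ - σₙ) * ((n : ℝ) - 1) := by rw [Real.sqrt_sq hσ, mul_comm]

theorem stmt_13 {n : ℕ} (hn : 2 ≤ n) (G : SimpleGraph (Fin n)) (hG : G.Connected)
    (α : ℝ) (hα : α ∈ Set.Icc (0 : ℝ) 1)
    (hA : (alphaDistMatrix G α).IsHermitian) (σ₁ σₙ : ℝ)
    (hσ₁ : IsGreatest (Set.range hA.eigenvalues) σ₁)
    (hσₙ : IsLeast (Set.range hA.eigenvalues) σₙ) (i : Fin n) :
    Real.sqrt ((2 * wiener G + (α * (n : ℝ) - 2) * transmission G i) ^ 2 -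
        4 * ((n : ℝ) - 1) *
          (2 * α * transmission G i * wiener G - (transmission G i) ^ 2)) / ((n : ℝ) - 1) ≤
      σ₁ - σₙ :=
  stmt_13_general hn G α hA σ₁ σₙ hσ₁ hσₙ i
end

section
/- Let G be a simple undirected connected transmission regular graph with n ≥ 2 vertices, with Tr(u) = r for every vertex u, and let α ∈ [0,1]. Then the α-distance Estrada index satisfies DEE_α(G) ≥ e^r + (n−1) + αnr − r. -/
open Finset Matrix Polynomial Real

/-!
The all-ones vector is an eigenvector of `D_α(G)` with eigenvalue `r`, because every row of
`D_α(G)` sums to the transmission of its vertex. The eigenvalues sum to `tr D_α(G) = α n r`.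
Bounding `e^σ ≥ 1 + σ` for the `n - 1` eigenvalues other than `r` gives the claim.
-/

theorem Matrix.IsHermitian.exists_eigenvalues_eq_of_mulVec_eq {ι 𝕜 : Type*} [Fintype ι]
    [DecidableEq ι] [RCLike 𝕜] {A : Matrix ι ι 𝕜} (hA : A.IsHermitian) {v : ι → 𝕜} (hv : v ≠ 0)
    {μ : ℝ} (h : A *ᵥ v = (μ : 𝕜) • v) : ∃ i, hA.eigenvalues i = μ := by
  have hμ : Module.End.HasEigenvalue A.toLin' (μ : 𝕜) :=
    Module.End.hasEigenvalue_of_hasEigenvector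
      ⟨Module.End.mem_eigenspace_iff.mpr (by rwa [toLin'_apply]), hv⟩
  have hspec := hμ.mem_spectrum
  rw [spectrum_toLin', hA.spectrum_eq_image_range] at hspec
  obtain ⟨_, ⟨i, rfl⟩, hi⟩ := hspec
  exact ⟨i, RCLike.ofReal_injective hi⟩

theorem Matrix.IsHermitian.sum_eigenvalues_eq_trace {ι : Type*} [Fintype ι] [DecidableEq ι]
    {A : Matrix ι ι ℝ} (hA : A.IsHermitian) : ∑ i, hA.eigenvalues i = A.trace := by
  simpa using hA.trace_eq_sum_eigenvalues.symm

theorem Real.exp_add_card_sub_one_add_sum_sub_le_sum_exp {ι : Type*} [Fintype ι]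
    (x : ι → ℝ) (i₀ : ι) :
    Real.exp (x i₀) + ((Fintype.card ι : ℝ) - 1) + (∑ i, x i - x i₀) ≤ ∑ i, Real.exp (x i) := by
  classical
  have hi₀ := mem_univ i₀
  have hrest : ((Fintype.card ι : ℝ) - 1) + (∑ i, x i - x i₀) = ∑ i ∈ univ.erase i₀, (x i + 1) := by
    rw [sum_add_distrib, sum_erase_eq_sub hi₀, sum_const, card_erase_of_mem hi₀, card_univ,
      nsmul_one, Nat.cast_pred (Fintype.card_pos_iff.mpr ⟨i₀⟩)]
    ring
  rw [add_assoc, hrest, ← add_sum_erase _ _ hi₀]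
  gcongr with i
  exact Real.add_one_le_exp (x i)

theorem distMatrix_mulVec_one {n : ℕ} (G : SimpleGraph (Fin n)) :
    distMatrix G *ᵥ 1 = transmission G := by
  ext i
  simp [mulVec, dotProduct, distMatrix, transmission]

theorem alphaDistMatrix_mulVec_one {n : ℕ} (G : SimpleGraph (Fin n)) (α : ℝ) :
    alphaDistMatrix G α *ᵥ 1 = transmission G := by
  ext i
  simp only [alphaDistMatrix, add_mulVec, smul_mulVec, distMatrix_mulVec_one, Pi.add_apply,
    Pi.smul_apply, mulVec_diagonal, Pi.one_apply, mul_one, smul_eq_mul]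
  ring

theorem trace_alphaDistMatrix_s17 {n : ℕ} (G : SimpleGraph (Fin n)) (α : ℝ) :
    (alphaDistMatrix G α).trace = α * ∑ i, transmission G i := by
  simp [alphaDistMatrix, trace, distMatrix, mul_sum]

theorem stmt_17_general {n : ℕ} (hn : 2 ≤ n) (G : SimpleGraph (Fin n))
    (r : ℝ) (hreg : ∀ i : Fin n, transmission G i = r)
    (α : ℝ)
    (hA : (alphaDistMatrix G α).IsHermitian) :
    Real.exp r + ((n : ℝ) - 1) + α * (n : ℝ) * r - r ≤
      ∑ i, Real.exp (hA.eigenvalues i) := by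
  have : Nonempty (Fin n) := ⟨⟨0, by omega⟩⟩
  obtain ⟨i₀, hi₀⟩ : ∃ i, hA.eigenvalues i = r :=
    hA.exists_eigenvalues_eq_of_mulVec_eq one_ne_zero <| by
      ext i
      simp [alphaDistMatrix_mulVec_one, hreg]
  have hsum : ∑ i, hA.eigenvalues i = α * n * r := by
    simp [hA.sum_eigenvalues_eq_trace, trace_alphaDistMatrix_s17, hreg, mul_assoc]
  have key := Real.exp_add_card_sub_one_add_sum_sub_le_sum_exp hA.eigenvalues i₀
  rw [hi₀, hsum, Fintype.card_fin] at key
  linarith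

theorem stmt_17 {n : ℕ} (hn : 2 ≤ n) (G : SimpleGraph (Fin n)) (hG : G.Connected)
    (r : ℝ) (hreg : ∀ i : Fin n, transmission G i = r)
    (α : ℝ) (hα : α ∈ Set.Icc (0 : ℝ) 1)
    (hA : (alphaDistMatrix G α).IsHermitian) :
    Real.exp r + ((n : ℝ) - 1) + α * (n : ℝ) * r - r ≤
      ∑ i, Real.exp (hA.eigenvalues i) :=
  stmt_17_general hn G r hreg α hA
end
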